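/- Let k ≥ 0 and let g : ℂ × ℂ × ℝ^k → ℝ be twice continuously differentiable. For ε ∈ ℝ define φ_ε(z₀, z₁, x) = g(z₀, z₁, x) − log|z₀z₁ + ε|² on the open set where z₀z₁ + ε ≠ 0. Fix x₀ ∈ ℝ^k and set p = (0, 0, x₀). Assume: (i) the Fréchet derivative of the function x ↦ g(0, 0, x) vanishes at x₀, and (ii) the second derivative (Hessian) of x ↦ g(0, 0, x) at x₀ is a nondegenerate bilinear form on ℝ^k. Then there exist ε₁ > 0 and an open neighborhood U of p in ℂ × ℂ × ℝ^k such that for every ε with 0 < ε < ε₁ there is exactly one point p_ε ∈ U at which the Fréchet derivative of φ_ε vanishes; moreover p_ε → p as ε → 0⁺. -/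

import Mathlib

/-!
Let `a, b ∈ ℂ` be the complex partial gradients of `g` in `z₀, z₁` (so that
`dg(h, 0, 0) = Re (conj a * h)`) and `c` its gradient in `x`. Since
`d log |w|² = 2 Re (dw / w)`, a point with `w = z₀z₁ + ε ≠ 0` is critical for `φ_ε` iff
`w * conj a = 2 z₁`, `w * conj b = 2 z₀` and `c = 0`. Unlike `dφ_ε = 0`, this system is `C¹` in
`(ε, q)` across `w = 0`, and at `(0, p)` its linearisation in `q` is
`(u₀, u₁, v) ↦ (-2u₁, -2u₀, Hess(v))`, which is invertible by nondegeneracy. The implicit function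
theorem then gives a unique solution near `p` for every small `ε`, and for `ε ≠ 0` a solution has
`w ≠ 0`, since `w = 0` forces `z₀ = z₁ = 0` and hence `w = ε`.
-/

open Filter Topology ComplexConjugate InnerProductSpace ContinuousLinearMap

theorem ContDiffAt.exists_isOpen_zero_iff_eq_of_injective {𝕜 : Type*} [RCLike 𝕜]
    {E₁ E₂ : Type*} [NormedAddCommGroup E₁] [NormedSpace 𝕜 E₁] [CompleteSpace E₁]
    [NormedAddCommGroup E₂] [NormedSpace 𝕜 E₂] [FiniteDimensional 𝕜 E₂]
    {f : E₁ × E₂ → E₂} {u : E₁ × E₂} (hf : ContDiffAt 𝕜 1 f u) (hu : f u = 0)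
    (hinj : Function.Injective (fderiv 𝕜 f u ∘L inr 𝕜 E₁ E₂)) :
    ∃ U : Set E₂, IsOpen U ∧ u.2 ∈ U ∧ ∃ ψ : E₁ → E₂, Tendsto ψ (𝓝 u.1) (𝓝 u.2) ∧
      ∀ᶠ ε in 𝓝 u.1, ψ ε ∈ U ∧ ∀ q ∈ U, f (ε, q) = 0 ↔ q = ψ ε := by
  have := FiniteDimensional.complete 𝕜 E₂
  have hinv : (fderiv 𝕜 f u ∘L inr 𝕜 E₁ E₂).IsInvertible :=
    ⟨(LinearEquiv.ofInjectiveEndo _ hinj).toContinuousLinearEquiv, rfl⟩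
  set ψ := hf.implicitFunction one_ne_zero hinv
  have hψ : Tendsto ψ (𝓝 u.1) (𝓝 u.2) := by
    simpa [ψ, hf.implicitFunction_apply_self] using
      (hf.contDiffAt_implicitFunction one_ne_zero hinv).continuousAt.tendsto
  obtain ⟨V, U, hV, hεV, hU, hqU, hVU⟩ :=
    mem_nhds_prod_iff'.1 (hf.eventually_apply_eq_iff_implicitFunction one_ne_zero hinv)
  refine ⟨U, hU, hqU, ψ, hψ, ?_⟩
  filter_upwards [hV.mem_nhds hεV, hψ (hU.mem_nhds hqU)] with ε hεV hψU
  refine ⟨hψU, fun q hq => ?_⟩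
  rw [← hu]
  exact (hVU ⟨hεV, hq⟩ : _).trans eq_comm

section PartialGradient

variable {E F : Type*} [NormedAddCommGroup E] [NormedSpace ℝ E]
  [NormedAddCommGroup F] [InnerProductSpace ℝ F] [CompleteSpace F]

noncomputable def partialGradient (ι : F →L[ℝ] E) (g : E → ℝ) (q : E) : F :=
  (toDual ℝ F).symm (fderiv ℝ g q ∘L ι)

variable (ι : F →L[ℝ] E) {g : E → ℝ}

theorem inner_partialGradient (q : E) (v : F) :
    ⟪partialGradient ι g q, v⟫_ℝ = fderiv ℝ g q (ι v) := by
  simp [partialGradient, toDual_symm_apply]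

theorem partialGradient_eq_zero_iff {q : E} :
    partialGradient ι g q = 0 ↔ fderiv ℝ g q ∘L ι = 0 := by
  simp [partialGradient]

theorem contDiff_partialGradient {n : WithTop ℕ∞} (hg : ContDiff ℝ (n + 1) g) :
    ContDiff ℝ n (partialGradient ι g) :=
  (toDual ℝ F).symm.contDiff.comp
    (((compL ℝ F E ℝ).flip ι).contDiff.comp (hg.fderiv_right le_rfl))

theorem inner_fderiv_partialGradient (hg : ContDiff ℝ 2 g) (q u : E) (w : F) :
    ⟪fderiv ℝ (partialGradient ι g) q u, w⟫_ℝ = fderiv ℝ (fderiv ℝ g) q u (ι w) := by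
  have hc : DifferentiableAt ℝ (partialGradient ι g) q :=
    (contDiff_partialGradient ι (n := 1) hg).differentiable one_ne_zero q
  have hDg : DifferentiableAt ℝ (fderiv ℝ g) q :=
    (hg.fderiv_right (m := 1) le_rfl).differentiable one_ne_zero q
  have key : (fun q => ⟪partialGradient ι g q, w⟫_ℝ) = fun q => fderiv ℝ g q (ι w) :=
    funext fun q => inner_partialGradient ι q w
  have := congrArg (fun f => fderiv ℝ f q u) key
  rw [fderiv_inner_apply ℝ hc (differentiableAt_const w),
    fderiv_clm_apply hDg (differentiableAt_const _)] at this
  simpa using this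

end PartialGradient

theorem fderiv_fderiv_comp_clm_apply {E F : Type*} [NormedAddCommGroup E] [NormedSpace ℝ E]
    [NormedAddCommGroup F] [NormedSpace ℝ F] (ι : F →L[ℝ] E) {g : E → ℝ} (hg : ContDiff ℝ 2 g)
    (x v w : F) :
    fderiv ℝ (fderiv ℝ (g ∘ ι)) x v w = fderiv ℝ (fderiv ℝ g) (ι x) (ι v) (ι w) := by
  have hDg : DifferentiableAt ℝ (fderiv ℝ g) (ι x) :=
    (hg.fderiv_right (m := 1) le_rfl).differentiable one_ne_zero _
  have hDgι : fderiv ℝ (g ∘ ι) = fun y => fderiv ℝ g (ι y) ∘L ι := funext fun y => by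
    rw [fderiv_comp y (hg.differentiable two_ne_zero _) ι.differentiableAt, ι.fderiv]
  have hD : HasFDerivAt (fun y => fderiv ℝ g (ι y) ∘L ι)
      ((compL ℝ F E ℝ).flip ι ∘L fderiv ℝ (fderiv ℝ g) (ι x) ∘L ι) x :=
    ((compL ℝ F E ℝ).flip ι).hasFDerivAt.comp x (hDg.hasFDerivAt.comp x ι.hasFDerivAt)
  rw [hDgι, hD.fderiv]
  rfl

theorem HasFDerivAt.log_normSq {E : Type*} [NormedAddCommGroup E] [NormedSpace ℝ E]
    {f : E → ℂ} {f' : E →L[ℝ] ℂ} {x : E} (hf : HasFDerivAt f f' x) (hx : f x ≠ 0) :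
    HasFDerivAt (fun y => Real.log (Complex.normSq (f y)))
      (Complex.reCLM ∘L ((2 / f x) • f')) x := by
  have h := hf.norm_sq.log (by simpa using hx)
  simp only [← Complex.normSq_eq_norm_sq] at h
  convert h using 1
  ext v
  simp only [comp_apply, smul_apply, Complex.reCLM_apply, innerSL_apply_apply, Complex.inner,
    smul_eq_mul]
  rw [div_mul_eq_mul_div, Complex.div_re]
  simp only [Complex.mul_re, Complex.mul_im, Complex.re_ofNat, Complex.im_ofNat,
    Complex.conj_re, Complex.conj_im, Complex.normSq_apply, nsmul_eq_mul,
    Nat.cast_ofNat]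
  ring

theorem hasFDerivAt_mul_mul_of_eq_zero {E : Type*} [NormedAddCommGroup E] [NormedSpace ℝ E]
    {f₁ f₂ k : E → ℂ} {f₁' f₂' : E →L[ℝ] ℂ} {x : E} (h₁ : HasFDerivAt f₁ f₁' x)
    (h₂ : HasFDerivAt f₂ f₂' x) (hk : DifferentiableAt ℝ k x) (hx₁ : f₁ x = 0) (hx₂ : f₂ x = 0) :
    HasFDerivAt (fun y => f₁ y * f₂ y * k y) (0 : E →L[ℝ] ℂ) x :=
  ((h₁.mul h₂).mul hk.hasFDerivAt).congr_fderiv (by ext; simp [hx₁, hx₂])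

theorem Complex.forall_inner_eq_re_mul_iff {a c : ℂ} :
    (∀ h : ℂ, ⟪a, h⟫_ℝ = (c * h).re) ↔ a = conj c := by
  have key (h : ℂ) : (c * h).re = ⟪conj c, h⟫_ℝ := by simp [Complex.inner, mul_comm]
  simp_rw [key]
  exact ⟨ext_inner_right ℝ, fun H h => H ▸ rfl⟩

theorem Complex.eq_conj_two_div_mul_iff {a w z : ℂ} (hw : w ≠ 0) :
    a = conj (2 / w * z) ↔ w * conj a - 2 * z = 0 := by
  constructor
  · rintro rfl
    rw [Complex.conj_conj]
    field_simp
    ring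
  · intro H
    rw [← conj_conj a]
    congr 1
    field_simp
    linear_combination H

section CriticalSystem

variable {F : Type*} [NormedAddCommGroup F] [InnerProductSpace ℝ F]

noncomputable def inclZ₀ : ℂ →L[ℝ] ℂ × ℂ × F := inl ℝ ℂ (ℂ × F)

noncomputable def inclZ₁ : ℂ →L[ℝ] ℂ × ℂ × F := inr ℝ ℂ (ℂ × F) ∘L inl ℝ ℂ F

noncomputable def inclX : F →L[ℝ] ℂ × ℂ × F := inr ℝ ℂ (ℂ × F) ∘L inr ℝ ℂ F

@[simp] theorem inclX_apply (x : F) : inclX x = (0, 0, x) := rfl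

variable [CompleteSpace F]

noncomputable def criticalSystem (g : ℂ × ℂ × F → ℝ) (P : ℝ × (ℂ × ℂ × F)) : ℂ × ℂ × F :=
  ((P.2.1 * P.2.2.1 + P.1) * conj (partialGradient inclZ₀ g P.2) - 2 * P.2.2.1,
    (P.2.1 * P.2.2.1 + P.1) * conj (partialGradient inclZ₁ g P.2) - 2 * P.2.1,
    partialGradient inclX g P.2)

variable {g : ℂ × ℂ × F → ℝ}

theorem fderiv_sub_log_normSq_eq_zero_iff {ε : ℝ} {q : ℂ × ℂ × F}
    (hg : DifferentiableAt ℝ g q) (hw : q.1 * q.2.1 + ε ≠ 0) :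
    fderiv ℝ (fun p : ℂ × ℂ × F => g p - Real.log (Complex.normSq (p.1 * p.2.1 + ε))) q = 0 ↔
      criticalSystem g (ε, q) = 0 := by
  have hW : HasFDerivAt (fun p : ℂ × ℂ × F => p.1 * p.2.1 + ε) _ q :=
    ((hasFDerivAt_fst (𝕜 := ℝ) (p := q)).mul (hasFDerivAt_snd (𝕜 := ℝ) (p := q)).fst).add_const _
  rw [(hg.hasFDerivAt.fun_sub (hW.log_normSq hw)).fderiv, sub_eq_zero, prod_ext_iff,
    prod_ext_iff]
  simp only [criticalSystem, Prod.mk_eq_zero]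
  refine and_congr ?_ (and_congr ?_ ?_)
  · rw [← Complex.eq_conj_two_div_mul_iff hw, ← Complex.forall_inner_eq_re_mul_iff,
      ContinuousLinearMap.ext_iff]
    refine forall_congr' fun h => ?_
    rw [inner_partialGradient]
    simp [inclZ₀, mul_assoc]
  · rw [← Complex.eq_conj_two_div_mul_iff hw, ← Complex.forall_inner_eq_re_mul_iff,
      ContinuousLinearMap.ext_iff]
    refine forall_congr' fun h => ?_
    rw [inner_partialGradient]
    simp [inclZ₁, mul_assoc]
  · rw [partialGradient_eq_zero_iff, ContinuousLinearMap.ext_iff, ContinuousLinearMap.ext_iff]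
    simp [inclX]

theorem mul_add_ne_zero_of_criticalSystem_eq_zero {ε : ℝ} {q : ℂ × ℂ × F}
    (h : criticalSystem g (ε, q) = 0) (hε : ε ≠ 0) : q.1 * q.2.1 + ε ≠ 0 := by
  intro hw
  simp only [criticalSystem, hw, zero_mul, zero_sub, neg_eq_zero, mul_eq_zero, Prod.mk_eq_zero]
    at h
  simp_all

theorem contDiff_criticalSystem (hg : ContDiff ℝ 2 g) : ContDiff ℝ 1 (criticalSystem g) := by
  have h₀ := contDiff_partialGradient (inclZ₀ (F := F)) (n := 1) hg
  have h₁ := contDiff_partialGradient (inclZ₁ (F := F)) (n := 1) hg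
  have hX := contDiff_partialGradient (inclX (F := F)) (n := 1) hg
  have hofReal : ContDiff ℝ 1 ((↑) : ℝ → ℂ) := Complex.ofRealCLM.contDiff
  have hconj : ContDiff ℝ 1 (conj : ℂ → ℂ) := Complex.conjCLE.contDiff
  unfold criticalSystem
  fun_prop

theorem criticalSystem_zero_inclX {x : F} (hg : DifferentiableAt ℝ g (inclX x))
    (h : fderiv ℝ (g ∘ inclX) x = 0) : criticalSystem g (0, inclX x) = 0 := by
  rw [fderiv_comp x hg (inclX (F := F)).differentiableAt, ContinuousLinearMap.fderiv] at h
  have hX := (partialGradient_eq_zero_iff _).2 h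
  rw [inclX_apply] at hX
  simp [criticalSystem, hX]

theorem fderiv_criticalSystem_zero_inclX_apply (hg : ContDiff ℝ 2 g) (x : F) (u : ℂ × ℂ × F) :
    fderiv ℝ (criticalSystem g) (0, inclX x) (0, u) =
      (-2 * u.2.1, -2 * u.1, fderiv ℝ (partialGradient inclX g) (inclX x) u) := by
  have hconj (ι : ℂ →L[ℝ] ℂ × ℂ × F) :
      DifferentiableAt ℝ (fun q => conj (partialGradient ι g q)) (inclX x) :=
    ((Complex.conjCLE.contDiff.comp (contDiff_partialGradient ι (n := 1) hg)).differentiable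
      one_ne_zero) _
  have hq₀ : HasFDerivAt (fun q : ℂ × ℂ × F => q.1) (fst ℝ ℂ (ℂ × F)) (inclX x) :=
    hasFDerivAt_fst
  have hq₁ : HasFDerivAt (fun q : ℂ × ℂ × F => q.2.1) (fst ℝ ℂ F ∘L snd ℝ ℂ (ℂ × F))
      (inclX x) :=
    (hasFDerivAt_snd (𝕜 := ℝ)).fst
  have hX : HasFDerivAt (partialGradient inclX g)
      (fderiv ℝ (partialGradient inclX g) (inclX x)) (inclX x) :=
    ((contDiff_partialGradient (inclX (F := F)) (n := 1) hg).differentiable one_ne_zero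
      _).hasFDerivAt
  have hz₀ : (inclX x).1 = 0 := by simp
  have hz₁ : (inclX x).2.1 = 0 := by simp
  -- the terms `z₀ z₁ * conj a` vanish to second order at `z₀ = z₁ = 0`
  have hexplicit := ((hasFDerivAt_mul_mul_of_eq_zero hq₀ hq₁ (hconj inclZ₀) hz₀ hz₁).sub
    (hq₁.const_mul (2 : ℂ))).prodMk (((hasFDerivAt_mul_mul_of_eq_zero hq₀ hq₁ (hconj inclZ₁) hz₀
    hz₁).sub (hq₀.const_mul (2 : ℂ))).prodMk hX)
  have hslice := (((contDiff_criticalSystem hg).differentiable one_ne_zero)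
    (0, inclX x)).hasFDerivAt.comp (inclX x) (hasFDerivAt_prodMk_right (0 : ℝ) (inclX x))
  have hfun : criticalSystem g ∘ (fun q => ((0 : ℝ), q)) = fun q =>
      (q.1 * q.2.1 * conj (partialGradient inclZ₀ g q) - 2 * q.2.1,
        q.1 * q.2.1 * conj (partialGradient inclZ₁ g q) - 2 * q.1, partialGradient inclX g q) := by
    funext q
    simp [criticalSystem]
  rw [hfun] at hslice
  simpa using DFunLike.congr_fun (hslice.unique hexplicit) u

theorem injective_fderiv_criticalSystem_comp_inr (hg : ContDiff ℝ 2 g) {x : F}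
    (hnd : ∀ v, v ≠ 0 → fderiv ℝ (fderiv ℝ (g ∘ inclX)) x v ≠ 0) :
    Function.Injective (fderiv ℝ (criticalSystem g) (0, inclX x) ∘L inr ℝ ℝ (ℂ × ℂ × F)) := by
  rw [injective_iff_map_eq_zero]
  intro u hu
  simp only [comp_apply, inr_apply, fderiv_criticalSystem_zero_inclX_apply hg, Prod.mk_eq_zero,
    mul_eq_zero, neg_eq_zero, two_ne_zero, false_or] at hu
  obtain ⟨h₁, h₀, hX⟩ := hu
  have hu : u = inclX u.2.2 := by simp [Prod.ext_iff, h₀, h₁]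
  suffices u.2.2 = 0 by rw [hu, this, map_zero]
  by_contra hv
  obtain ⟨w, hw⟩ : ∃ w, fderiv ℝ (fderiv ℝ (g ∘ inclX)) x u.2.2 w ≠ 0 := by
    by_contra! H
    exact hnd _ hv (ContinuousLinearMap.ext H)
  rw [fderiv_fderiv_comp_clm_apply _ hg, ← inner_fderiv_partialGradient _ hg, ← hu, hX,
    inner_zero_left] at hw
  exact hw rfl

end CriticalSystem

/-- Local model of Theorem 1: if `x₀` is a nondegenerate critical point of
`x ↦ g(0,0,x)`, then for every sufficiently small `ε > 0` the function
`φ_ε = g - log|z₀z₁ + ε|²` has exactly one critical point near `p = (0,0,x₀)`, and these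
critical points converge to `p` as `ε → 0⁺`. -/
theorem unique_critical_point_near_singular_set
    (k : ℕ) (g : ℂ × ℂ × EuclideanSpace ℝ (Fin k) → ℝ) (hg : ContDiff ℝ 2 g)
    (x₀ : EuclideanSpace ℝ (Fin k))
    (hcrit : fderiv ℝ (fun y : EuclideanSpace ℝ (Fin k) => g ((0 : ℂ), (0 : ℂ), y)) x₀ = 0)
    (hnd : ∀ v : EuclideanSpace ℝ (Fin k), v ≠ 0 →
      fderiv ℝ (fderiv ℝ (fun y : EuclideanSpace ℝ (Fin k) => g ((0 : ℂ), (0 : ℂ), y))) x₀ v ≠ 0) :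
    ∃ ε₁ > (0 : ℝ), ∃ U : Set (ℂ × ℂ × EuclideanSpace ℝ (Fin k)), IsOpen U ∧
      ((0 : ℂ), (0 : ℂ), x₀) ∈ U ∧
      ∃ pfun : ℝ → ℂ × ℂ × EuclideanSpace ℝ (Fin k),
        (∀ ε : ℝ, 0 < ε → ε < ε₁ →
          pfun ε ∈ U ∧ (pfun ε).1 * (pfun ε).2.1 + (ε : ℂ) ≠ 0 ∧
          fderiv ℝ (fun p : ℂ × ℂ × EuclideanSpace ℝ (Fin k) =>
            g p - Real.log (Complex.normSq (p.1 * p.2.1 + (ε : ℂ)))) (pfun ε) = 0 ∧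
          ∀ q ∈ U, q.1 * q.2.1 + (ε : ℂ) ≠ 0 →
            fderiv ℝ (fun p : ℂ × ℂ × EuclideanSpace ℝ (Fin k) =>
              g p - Real.log (Complex.normSq (p.1 * p.2.1 + (ε : ℂ)))) q = 0 →
            q = pfun ε) ∧
        Tendsto pfun (𝓝[>] (0 : ℝ)) (𝓝 ((0 : ℂ), (0 : ℂ), x₀)) := by
  have hgd : Differentiable ℝ g := hg.differentiable two_ne_zero
  obtain ⟨U, hU, hpU, ψ, hψ, hev⟩ :=
    (contDiff_criticalSystem hg).contDiffAt.exists_isOpen_zero_iff_eq_of_injective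
      (criticalSystem_zero_inclX (hgd _) hcrit) (injective_fderiv_criticalSystem_comp_inr hg hnd)
  obtain ⟨ε₁, hε₁, hball⟩ := Metric.eventually_nhds_iff_ball.1 hev
  refine ⟨ε₁, hε₁, U, hU, hpU, ψ, fun ε hε hεε₁ => ?_, hψ.mono_left nhdsWithin_le_nhds⟩
  obtain ⟨hψU, hzero⟩ := hball ε (by simpa [abs_of_pos hε] using hεε₁)
  have hψε : criticalSystem g (ε, ψ ε) = 0 := (hzero _ hψU).2 rfl
  have hw := mul_add_ne_zero_of_criticalSystem_eq_zero hψε hε.ne'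
  exact ⟨hψU, hw, (fderiv_sub_log_normSq_eq_zero_iff (hgd _) hw).2 hψε,
    fun q hq hqw hqc => (hzero q hq).1 ((fderiv_sub_log_normSq_eq_zero_iff (hgd _) hqw).1 hqc)⟩
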